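/- arXiv:2008.08539 — 3 statements merged into one kernel-verified Lean document; each statement's English description precedes it below -/
import Mathlib

section
/- Let 0 < q < p ≤ 1 and let S_p = S_{p,p} and S_q = S_{q,q} be generalised hyperbolic spirals. If f : S_p → S_q is a surjective α-Hölder map, then α ≤ (p + q)/(2p). -/
open Set Metric MeasureTheory

noncomputable def spiral (p q : ℝ) : Set ℂ :=
  {z : ℂ | ∃ t : ℝ, 1 < t ∧
    z = (t ^ (-p) * Real.cos t : ℝ) + (t ^ (-q) * Real.sin t : ℝ) * Complex.I}

/-- `f` is `α`-Hölder on the set `A`. -/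
def HolderOnSet (f : ℂ → ℂ) (α : ℝ) (A : Set ℂ) : Prop :=
  ∃ c : ℝ, 0 < c ∧ ∀ x ∈ A, ∀ y ∈ A, dist (f x) (f y) ≤ c * dist x y ^ α

/-!
The points of `S_q` with parameters `π (n + 1)`, `n ≤ K`, lie alternately on opposite sides of
the origin, so consecutive ones are at distance at least `(π (K + 1)) ^ (-q)`. The intermediate
value theorem, applied to `‖f‖` along `S_p`, gives them preimages at monotone parameters
`v 0 ≤ ⋯ ≤ v K`. By Hölder continuity consecutive preimages are `ε ≍ K ^ (-q / α)` apart, which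
forces `v i ≲ ε ^ (-1 / p)`. The arc of `S_p` up to parameter `V` has length `≲ V ^ (1 - s)` for
any `s ≤ p` with `s < 1`, so `K ε ≲ ε ^ (-(1 - s) / p)`. For large `K` this fails as soon as
`α > q / p`, whence `α ≤ q / p ≤ (p + q) / (2 p)`.
-/

open Filter Topology
open scoped Real

noncomputable def spiralPoint (e t : ℝ) : ℂ := ((t ^ (-e) : ℝ) : ℂ) * Complex.exp (t * Complex.I)

theorem mem_spiral_iff {e : ℝ} {z : ℂ} : z ∈ spiral e e ↔ ∃ t, 1 < t ∧ spiralPoint e t = z := by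
  have h (t : ℝ) : spiralPoint e t =
      ((t ^ (-e) * Real.cos t : ℝ) : ℂ) + ((t ^ (-e) * Real.sin t : ℝ) : ℂ) * Complex.I := by
    rw [spiralPoint, Complex.exp_mul_I, ← Complex.ofReal_cos, ← Complex.ofReal_sin]
    push_cast
    ring
  simp only [spiral, h, eq_comm, mem_ofPred_eq]

theorem spiralPoint_mem_spiral {e t : ℝ} (ht : 1 < t) : spiralPoint e t ∈ spiral e e :=
  mem_spiral_iff.2 ⟨t, ht, rfl⟩

theorem continuousOn_spiralPoint (e : ℝ) : ContinuousOn (spiralPoint e) (Ioi 0) := by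
  unfold spiralPoint
  refine ContinuousOn.mul ?_ (by fun_prop)
  exact Complex.continuous_ofReal.comp_continuousOn
    (continuousOn_id.rpow_const fun t ht => Or.inl (ne_of_gt ht))

theorem norm_spiralPoint (e : ℝ) {t : ℝ} (ht : 0 ≤ t) : ‖spiralPoint e t‖ = t ^ (-e) := by
  rw [spiralPoint, norm_mul, Complex.norm_real, Real.norm_eq_abs, Complex.norm_exp_ofReal_mul_I,
    mul_one, abs_of_nonneg (Real.rpow_nonneg ht _)]

theorem eq_spiralPoint_of_norm_eq {e τ : ℝ} {z : ℂ} (he : e ≠ 0) (hz : z ∈ spiral e e)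
    (hτ : 0 ≤ τ) (h : ‖z‖ = τ ^ (-e)) : z = spiralPoint e τ := by
  obtain ⟨t, ht, rfl⟩ := mem_spiral_iff.1 hz
  rw [norm_spiralPoint e (by linarith)] at h
  rw [Real.rpow_left_injOn (neg_ne_zero.2 he) (by simp; linarith) hτ h]

theorem dist_spiralPoint_add_pi (e : ℝ) {t : ℝ} (ht : 0 ≤ t) :
    dist (spiralPoint e t) (spiralPoint e (t + π)) = t ^ (-e) + (t + π) ^ (-e) := by
  have h : spiralPoint e t - spiralPoint e (t + π) =
      ((t ^ (-e) + (t + π) ^ (-e) : ℝ) : ℂ) * Complex.exp (t * Complex.I) := by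
    simp only [spiralPoint, Complex.ofReal_add, add_mul, Complex.exp_add, Complex.exp_pi_mul_I]
    ring
  rw [dist_eq_norm, h, norm_mul, Complex.norm_real, Complex.norm_exp_ofReal_mul_I, mul_one,
    Real.norm_of_nonneg (by positivity)]

theorem dist_spiralPoint_le_two_mul {e a b : ℝ} (he : 0 ≤ e) (ha : 0 < a) (hab : a ≤ b) :
    dist (spiralPoint e a) (spiralPoint e b) ≤ 2 * a ^ (-e) := by
  rw [dist_eq_norm]
  refine (norm_sub_le _ _).trans ?_
  rw [norm_spiralPoint e ha.le, norm_spiralPoint e (ha.le.trans hab)]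
  linarith [Real.rpow_le_rpow_of_nonpos ha hab (neg_nonpos.2 he)]

theorem norm_exp_mul_I_sub_exp_mul_I_le (a b : ℝ) :
    ‖Complex.exp (a * Complex.I) - Complex.exp (b * Complex.I)‖ ≤ |a - b| := by
  have h : Complex.exp (a * Complex.I) - Complex.exp (b * Complex.I) =
      Complex.exp (b * Complex.I) * (Complex.exp (Complex.I * (a - b : ℝ)) - 1) := by
    rw [mul_sub, ← Complex.exp_add, mul_one]
    push_cast
    ring_nf
  rw [h, norm_mul, Complex.norm_exp_ofReal_mul_I, one_mul]
  exact Real.norm_exp_I_mul_ofReal_sub_one_le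

theorem dist_spiralPoint_le {e a b : ℝ} (he : 0 ≤ e) (ha : 0 < a) (hab : a ≤ b) :
    dist (spiralPoint e a) (spiralPoint e b) ≤ (a ^ (-e) - b ^ (-e)) + b ^ (-e) * (b - a) := by
  have h : spiralPoint e a - spiralPoint e b =
      ((a ^ (-e) - b ^ (-e) : ℝ) : ℂ) * Complex.exp (a * Complex.I) +
        ((b ^ (-e) : ℝ) : ℂ) * (Complex.exp (a * Complex.I) - Complex.exp (b * Complex.I)) := by
    simp only [spiralPoint, Complex.ofReal_sub]
    ring
  have hdecr : b ^ (-e) ≤ a ^ (-e) := Real.rpow_le_rpow_of_nonpos ha hab (neg_nonpos.2 he)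
  have hb : 0 ≤ b ^ (-e) := Real.rpow_nonneg (ha.le.trans hab) _
  rw [dist_eq_norm, h]
  refine (norm_add_le _ _).trans ?_
  rw [norm_mul, norm_mul, Complex.norm_real, Complex.norm_real, Complex.norm_exp_ofReal_mul_I,
    mul_one, Real.norm_of_nonneg (sub_nonneg.2 hdecr), Real.norm_of_nonneg hb]
  gcongr
  exact (norm_exp_mul_I_sub_exp_mul_I_le a b).trans_eq
    (by rw [abs_sub_comm, abs_of_nonneg (by linarith)])

theorem mul_rpow_sub_one_mul_sub_le {r a b : ℝ} (hr0 : 0 ≤ r) (hr1 : r ≤ 1) (ha : 0 < a)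
    (hab : a ≤ b) : r * b ^ (r - 1) * (b - a) ≤ b ^ r - a ^ r := by
  have hb : 0 < b := ha.trans_le hab
  have hamgm := Real.geom_mean_le_arith_mean2_weighted hr0 (sub_nonneg.2 hr1) ha.le hb.le
    (add_sub_cancel r 1)
  have h1 : b ^ (r - 1) * b = b ^ r := by rw [Real.rpow_sub_one hb.ne', div_mul_cancel₀ _ hb.ne']
  have h2 : a ^ r * b ^ (1 - r) * b ^ (r - 1) = a ^ r := by
    rw [mul_assoc, ← Real.rpow_add hb, sub_add_sub_cancel', sub_self, Real.rpow_zero, mul_one]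
  have := mul_le_mul_of_nonneg_right hamgm (Real.rpow_nonneg hb.le (r - 1))
  nlinarith

theorem dist_spiralPoint_le_sub {p s a b : ℝ} (hs0 : 0 ≤ s) (hsp : s ≤ p) (hs1 : s < 1)
    (ha : 1 ≤ a) (hab : a ≤ b) :
    dist (spiralPoint p a) (spiralPoint p b) ≤
      ((1 - s)⁻¹ * b ^ (1 - s) - b ^ (-p)) - ((1 - s)⁻¹ * a ^ (1 - s) - a ^ (-p)) := by
  have hb : 1 ≤ b := ha.trans hab
  have hpow : b ^ (-p) * (b - a) ≤ b ^ (-s) * (b - a) := by gcongr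
  have hconc := mul_rpow_sub_one_mul_sub_le (by linarith) (by linarith : 1 - s ≤ 1)
    (by linarith : (0 : ℝ) < a) hab
  rw [sub_sub_cancel_left] at hconc
  have hconc' : b ^ (-s) * (b - a) ≤ (1 - s)⁻¹ * (b ^ (1 - s) - a ^ (1 - s)) := by
    rw [le_inv_mul_iff₀ (by linarith), ← mul_assoc]
    exact hconc
  linarith [dist_spiralPoint_le (hs0.trans hsp) (by linarith) hab]

theorem nat_mul_le_rpow_of_le_dist_spiralPoint {p s ε : ℝ} (hs0 : 0 ≤ s) (hsp : s ≤ p) (hs1 : s < 1)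
    {v : ℕ → ℝ} {K : ℕ} (hv : ∀ i ≤ K, 1 ≤ v i) (hmono : ∀ i < K, v i ≤ v (i + 1))
    (hsep : ∀ i < K, ε ≤ dist (spiralPoint p (v i)) (spiralPoint p (v (i + 1)))) :
    K * ε ≤ 1 + (1 - s)⁻¹ * v K ^ (1 - s) := by
  set Φ : ℝ → ℝ := fun t => (1 - s)⁻¹ * t ^ (1 - s) - t ^ (-p)
  have hstep : ∀ i ∈ Finset.range K, ε ≤ Φ (v (i + 1)) - Φ (v i) := fun i hi =>
    (hsep i (Finset.mem_range.1 hi)).trans (dist_spiralPoint_le_sub hs0 hsp hs1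
      (hv i (Finset.mem_range.1 hi).le) (hmono i (Finset.mem_range.1 hi)))
  have hv0 : 1 ≤ v 0 := hv 0 K.zero_le
  have hvK : 0 ≤ v K := by linarith [hv K le_rfl]
  have hΦ0 : -1 ≤ Φ (v 0) := by
    have : v 0 ^ (-p) ≤ 1 := Real.rpow_le_one_of_one_le_of_nonpos hv0 (by linarith)
    have : 0 ≤ (1 - s)⁻¹ * v 0 ^ (1 - s) :=
      mul_nonneg (inv_nonneg.2 (by linarith)) (Real.rpow_nonneg (by linarith) _)
    linarith
  calc K * ε = ∑ _i ∈ Finset.range K, ε := by simp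
    _ ≤ ∑ i ∈ Finset.range K, (Φ (v (i + 1)) - Φ (v i)) := Finset.sum_le_sum hstep
    _ = Φ (v K) - Φ (v 0) := Finset.sum_range_sub (Φ ∘ v) K
    _ ≤ 1 + (1 - s)⁻¹ * v K ^ (1 - s) := by
      linarith [Real.rpow_nonneg hvK (-p)]

theorem le_rpow_inv_of_le_dist_spiralPoint {p ε a b : ℝ} (hp : 0 < p) (hε : 0 < ε) (ha : 0 < a)
    (hab : a ≤ b) (h : ε ≤ dist (spiralPoint p a) (spiralPoint p b)) : a ≤ (2 / ε) ^ p⁻¹ := by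
  have hap : 0 < a ^ p := Real.rpow_pos_of_pos ha p
  have h2 := h.trans (dist_spiralPoint_le_two_mul hp.le ha hab)
  rw [Real.rpow_neg ha.le] at h2
  rw [Real.le_rpow_inv_iff_of_pos ha.le (by positivity) hp, le_div_iff₀ hε]
  calc a ^ p * ε ≤ a ^ p * (2 * (a ^ p)⁻¹) := by gcongr
    _ = 2 := by field_simp

theorem nat_mul_le_of_le_dist_spiralPoint {p s ε : ℝ} (hp : 0 < p) (hs0 : 0 ≤ s) (hsp : s ≤ p)
    (hs1 : s < 1) (hε : 0 < ε) {v : ℕ → ℝ} {K : ℕ} (hv : ∀ i ≤ K + 1, 1 ≤ v i)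
    (hmono : ∀ i < K + 1, v i ≤ v (i + 1))
    (hsep : ∀ i < K + 1, ε ≤ dist (spiralPoint p (v i)) (spiralPoint p (v (i + 1)))) :
    K * ε ≤ 1 + (1 - s)⁻¹ * (2 / ε) ^ (p⁻¹ * (1 - s)) := by
  have hvK : v K ≤ (2 / ε) ^ p⁻¹ := le_rpow_inv_of_le_dist_spiralPoint hp hε
    (by linarith [hv K (by omega)]) (hmono K (by omega)) (hsep K (by omega))
  have hs1' : 0 < 1 - s := by linarith
  calc K * ε ≤ 1 + (1 - s)⁻¹ * v K ^ (1 - s) :=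
        nat_mul_le_rpow_of_le_dist_spiralPoint hs0 hsp hs1 (fun i hi => hv i (by omega))
          (fun i hi => hmono i (by omega)) (fun i hi => hsep i (by omega))
    _ ≤ 1 + (1 - s)⁻¹ * ((2 / ε) ^ p⁻¹) ^ (1 - s) := by
        gcongr
        linarith [hv K (by omega)]
    _ = 1 + (1 - s)⁻¹ * (2 / ε) ^ (p⁻¹ * (1 - s)) := by rw [← Real.rpow_mul (by positivity)]

theorem HolderOnSet.continuousOn {f : ℂ → ℂ} {α : ℝ} {A : Set ℂ} (hf : HolderOnSet f α A)
    (hα : 0 < α) : ContinuousOn f A := by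
  obtain ⟨c, -, hc⟩ := hf
  intro x hx
  rw [ContinuousWithinAt, tendsto_iff_dist_tendsto_zero]
  have hlim : Tendsto (fun y => c * dist y x ^ α) (𝓝[A] x) (𝓝 0) := by
    have := (((continuous_id.dist (continuous_const (y := x))).rpow_const
      fun _ => Or.inr hα.le).const_mul c).tendsto x
    simpa [Real.zero_rpow hα.ne'] using this.mono_left nhdsWithin_le_nhds
  exact squeeze_zero' (Eventually.of_forall fun _ => dist_nonneg)
    (eventually_nhdsWithin_of_forall fun y hy => hc y hy x hx) hlim

theorem div_rpow_inv_le_of_le_mul_rpow {D c d α : ℝ} (hD : 0 ≤ D) (hc : 0 < c) (hd : 0 ≤ d)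
    (hα : 0 < α) (h : D ≤ c * d ^ α) : (D / c) ^ α⁻¹ ≤ d := by
  rw [Real.rpow_inv_le_iff_of_pos (div_nonneg hD hc.le) hd hα, div_le_iff₀' hc]
  exact h

theorem exists_monotone_seq_hitting_of_continuousOn {J : ℝ → ℝ} (K : ℕ) :
    ∀ {R : ℕ → ℝ} {a b : ℝ}, (Monotone R ∨ Antitone R) → a ≤ b → ContinuousOn J (Icc a b) →
      J a = R 0 → J b = R K →
      ∃ v : ℕ → ℝ, (∀ i ≤ K, v i ∈ Icc a b ∧ J (v i) = R i) ∧ ∀ i < K, v i ≤ v (i + 1) := by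
  induction K with
  | zero =>
    intro R a b _ hab _ ha _
    exact ⟨fun _ => a, fun i hi => by simp_all, fun i hi => absurd hi (Nat.not_lt_zero i)⟩
  | succ K ih =>
    intro R a b hR hab hJ ha hb
    have hR1 : R 1 ∈ uIcc (J a) (J b) := by
      rw [ha, hb, mem_uIcc]
      rcases hR with hR | hR
      · exact Or.inl ⟨hR (Nat.zero_le 1), hR (Nat.le_add_left 1 K)⟩
      · exact Or.inr ⟨hR (Nat.le_add_left 1 K), hR (Nat.zero_le 1)⟩
    obtain ⟨s, hs, hJs⟩ := intermediate_value_uIcc (by rwa [uIcc_of_le hab]) hR1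
    rw [uIcc_of_le hab] at hs
    have hsucc : Monotone (· + 1 : ℕ → ℕ) := fun _ _ h => Nat.succ_le_succ h
    obtain ⟨w, hw, hwmono⟩ := ih (R := fun i => R (i + 1))
      (hR.imp (·.comp hsucc) (·.comp_monotone hsucc)) hs.2 (hJ.mono (Icc_subset_Icc_left hs.1))
      hJs hb
    refine ⟨fun | 0 => a | i + 1 => w i, ?_, ?_⟩
    · rintro (_ | i) hi
      · exact ⟨left_mem_Icc.2 hab, ha⟩
      · obtain ⟨hwi, hJwi⟩ := hw i (by omega)
        exact ⟨Icc_subset_Icc_left hs.1 hwi, hJwi⟩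
    · rintro (_ | i) hi
      · exact hs.1.trans (hw 0 (Nat.zero_le K)).1.1
      · exact hwmono i (by omega)

theorem rpow_neg_le_dist_spiralPoint_add_pi {q t T : ℝ} (hq : 0 ≤ q) (ht : 0 < t)
    (htT : t + π ≤ T) : T ^ (-q) ≤ dist (spiralPoint q t) (spiralPoint q (t + π)) := by
  rw [dist_spiralPoint_add_pi q ht.le]
  have := Real.rpow_le_rpow_of_nonpos (by positivity) htT (neg_nonpos.2 hq)
  linarith [Real.rpow_nonneg ht.le (-q)]

theorem exists_map_spiralPoint_eq {p q τ : ℝ} {f : ℂ → ℂ} (hf : SurjOn f (spiral p p) (spiral q q))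
    (hτ : 1 < τ) : ∃ s, 1 < s ∧ f (spiralPoint p s) = spiralPoint q τ := by
  obtain ⟨z, hz, hfz⟩ := hf (spiralPoint_mem_spiral hτ)
  obtain ⟨s, hs, rfl⟩ := mem_spiral_iff.1 hz
  exact ⟨s, hs, hfz⟩

theorem exists_monotone_seq_map_spiralPoint_eq {p q a b : ℝ} {f : ℂ → ℂ} (hq : 0 < q)
    (hf : ContinuousOn f (spiral p p)) (hmaps : MapsTo f (spiral p p) (spiral q q))
    {σ : ℕ → ℝ} (hσ : Monotone σ ∨ Antitone σ) (hσ1 : ∀ n, 1 < σ n) {K : ℕ} (ha : 1 < a)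
    (hab : a ≤ b) (hfa : f (spiralPoint p a) = spiralPoint q (σ 0))
    (hfb : f (spiralPoint p b) = spiralPoint q (σ K)) :
    ∃ v : ℕ → ℝ, (∀ i ≤ K, 1 < v i ∧ f (spiralPoint p (v i)) = spiralPoint q (σ i)) ∧
      ∀ i < K, v i ≤ v (i + 1) := by
  set J : ℝ → ℝ := fun s => ‖f (spiralPoint p s)‖
  have hJ : ContinuousOn J (Icc a b) :=
    continuous_norm.comp_continuousOn <| hf.comp
      ((continuousOn_spiralPoint p).mono fun t ht => mem_Ioi.2 (by linarith [ht.1]))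
      fun t ht => spiralPoint_mem_spiral (ha.trans_le ht.1)
  have hJ_eq {s : ℝ} {n : ℕ} (h : f (spiralPoint p s) = spiralPoint q (σ n)) :
      J s = σ n ^ (-q) := by
    simp only [J, h, norm_spiralPoint q (by linarith [hσ1 n] : 0 ≤ σ n)]
  have hanti {m n : ℕ} (h : σ m ≤ σ n) : σ n ^ (-q) ≤ σ m ^ (-q) :=
    Real.rpow_le_rpow_of_nonpos (by linarith [hσ1 m]) h (by linarith)
  obtain ⟨v, hv, hvmono⟩ := exists_monotone_seq_hitting_of_continuousOn K
    (R := fun n => σ n ^ (-q)) (hσ.symm.imp (fun h _ _ hmn => hanti (h hmn))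
      (fun h _ _ hmn => hanti (h hmn))) hab hJ (hJ_eq hfa) (hJ_eq hfb)
  refine ⟨v, fun i hi => ?_, hvmono⟩
  have hvi : 1 < v i := ha.trans_le (hv i hi).1.1
  exact ⟨hvi, eq_spiralPoint_of_norm_eq hq.ne' (hmaps (spiralPoint_mem_spiral hvi))
    (by linarith [hσ1 i]) (hv i hi).2⟩

theorem exists_monotone_seq_rpow_le_dist_image {p q : ℝ} {f : ℂ → ℂ} (hq : 0 < q)
    (hf : ContinuousOn f (spiral p p)) (hsurj : f '' spiral p p = spiral q q) (K : ℕ) :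
    ∃ v : ℕ → ℝ, (∀ i ≤ K, 1 < v i) ∧ (∀ i < K, v i ≤ v (i + 1)) ∧
      ∀ i < K, (π * (K + 1)) ^ (-q) ≤
        dist (f (spiralPoint p (v i))) (f (spiralPoint p (v (i + 1)))) := by
  set τ : ℕ → ℝ := fun n => π * (n + 1)
  have hτ1 (n : ℕ) : 1 < τ n := by nlinarith [Real.pi_gt_three, (n.cast_nonneg : (0 : ℝ) ≤ n)]
  have hτmono : Monotone τ := fun m n h =>
    mul_le_mul_of_nonneg_left (by exact_mod_cast Nat.add_le_add_right h 1) Real.pi_pos.le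
  have hgap (n : ℕ) (hn : n + 1 ≤ K) :
      τ K ^ (-q) ≤ dist (spiralPoint q (τ n)) (spiralPoint q (τ (n + 1))) := by
    have hτsucc : τ (n + 1) = τ n + π := by simp only [τ]; push_cast; ring
    rw [hτsucc]
    exact rpow_neg_le_dist_spiralPoint_add_pi hq.le (by linarith [hτ1 n]) (hτsucc ▸ hτmono hn)
  have hmaps : MapsTo f (spiral p p) (spiral q q) := hsurj ▸ mapsTo_image f _
  obtain ⟨s₀, hs₀, hfs₀⟩ := exists_map_spiralPoint_eq hsurj.ge (hτ1 0)
  obtain ⟨sK, hsK, hfsK⟩ := exists_map_spiralPoint_eq hsurj.ge (hτ1 K)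
  rcases le_total s₀ sK with hle | hle
  · obtain ⟨v, hv, hvmono⟩ := exists_monotone_seq_map_spiralPoint_eq hq hf hmaps
      (Or.inl hτmono) hτ1 hs₀ hle hfs₀ hfsK
    refine ⟨v, fun i hi => (hv i hi).1, hvmono, fun i hi => ?_⟩
    rw [(hv i hi.le).2, (hv (i + 1) hi).2]
    exact hgap i hi
  · obtain ⟨v, hv, hvmono⟩ := exists_monotone_seq_map_spiralPoint_eq hq hf hmaps
      (σ := fun n => τ (K - n)) (K := K)
      (Or.inr (hτmono.comp_antitone fun _ _ h => Nat.sub_le_sub_left h K)) (fun n => hτ1 _)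
      hsK hle (by simp only [Nat.sub_zero, hfsK]) (by simp only [Nat.sub_self, hfs₀])
    refine ⟨v, fun i hi => (hv i hi).1, hvmono, fun i hi => ?_⟩
    rw [(hv i hi.le).2, (hv (i + 1) hi).2, dist_comm, show K - i = K - (i + 1) + 1 by omega]
    exact hgap _ (by omega)

theorem le_mul_rpow_of_mul_inv_le {K κ T A u w : ℝ} (hκ : 0 < κ) (hT : 1 ≤ T) (hu : 0 ≤ u)
    (hw : 0 ≤ w) (h : K * (κ * T ^ u)⁻¹ ≤ 1 + A * (2 / (κ * T ^ u)⁻¹) ^ w) :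
    K ≤ (κ + A * κ * (2 * κ) ^ w) * T ^ (u * (1 + w)) := by
  have hT0 : 0 < T := by linarith
  rw [mul_inv_le_iff₀ (by positivity), div_inv_eq_mul] at h
  have hTu : T ^ u ≤ T ^ (u * (1 + w)) :=
    Real.rpow_le_rpow_of_exponent_le hT (le_mul_of_one_le_right hu (by linarith))
  calc K ≤ (1 + A * (2 * (κ * T ^ u)) ^ w) * (κ * T ^ u) := h
    _ = κ * T ^ u + A * κ * (2 * κ) ^ w * T ^ (u * (1 + w)) := by
      rw [← mul_assoc 2 κ, Real.mul_rpow (by positivity) (by positivity),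
        ← Real.rpow_mul hT0.le, mul_one_add u w, Real.rpow_add hT0]
      ring
    _ ≤ κ * T ^ (u * (1 + w)) + A * κ * (2 * κ) ^ w * T ^ (u * (1 + w)) := by gcongr
    _ = (κ + A * κ * (2 * κ) ^ w) * T ^ (u * (1 + w)) := by ring

theorem exists_nat_mul_rpow_lt {a b C β : ℝ} (ha : 0 ≤ a) (hb : 0 ≤ b) (hC : 0 ≤ C)
    (hβ0 : 0 ≤ β) (hβ1 : β < 1) : ∃ K : ℕ, C * (a * (K + b)) ^ β < K := by
  have htend : Tendsto (fun K : ℕ => (K : ℝ) ^ (1 - β)) atTop atTop :=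
    (tendsto_rpow_atTop (sub_pos.2 hβ1)).comp tendsto_natCast_atTop_atTop
  obtain ⟨K, hKC, hK1⟩ :=
    ((htend.eventually_gt_atTop (C * (a * (1 + b)) ^ β)).and (eventually_ge_atTop 1)).exists
  have hK : (1 : ℝ) ≤ K := by exact_mod_cast hK1
  refine ⟨K, ?_⟩
  calc C * (a * (K + b)) ^ β ≤ C * (a * (1 + b) * K) ^ β := by
        refine mul_le_mul_of_nonneg_left (Real.rpow_le_rpow (by positivity) ?_ hβ0) hC
        nlinarith [mul_le_mul_of_nonneg_left hK (mul_nonneg ha hb)]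
    _ = C * (a * (1 + b)) ^ β * K ^ β := by
        rw [Real.mul_rpow (by positivity) (by positivity)]
        ring
    _ < K ^ (1 - β) * K ^ β := by
        gcongr
    _ = K := by rw [← Real.rpow_add (by positivity), sub_add_cancel, Real.rpow_one]

theorem holder_exponent_le_div_of_image_spiral_eq {p q α : ℝ} {f : ℂ → ℂ} (hq : 0 < q)
    (hp0 : 0 < p) (hp1 : p ≤ 1) (hα : 0 < α) (hsurj : f '' spiral p p = spiral q q)
    (hf : HolderOnSet f α (spiral p p)) : α ≤ q / p := by
  by_contra! hlt
  obtain ⟨c, hc, hfc⟩ := id hf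
  set u := q / α
  have hu0 : 0 < u := div_pos hq hα
  have hup : u < p := by
    rw [div_lt_iff₀ hp0] at hlt
    rw [div_lt_iff₀ hα]
    linarith
  -- `s < 1` keeps the arc length a power even when `p = 1`; and `u * (1 + w) < 1` because
  -- `2 p - u (2 + p - u) = (p - u) (2 - u)`.
  set s := (p + u) / 2 with hs
  obtain ⟨hs0, hsp, hs1⟩ : 0 ≤ s ∧ s ≤ p ∧ s < 1 := by refine ⟨?_, ?_, ?_⟩ <;> linarith
  set w := p⁻¹ * (1 - s) with hw
  have hexp : u * (1 + w) < 1 := by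
    rw [show u * (1 + w) = u * (2 + p - u) / (2 * p) by rw [hw, hs]; field_simp; ring,
      div_lt_one (by positivity)]
    nlinarith
  have hκ : 0 < c ^ α⁻¹ := Real.rpow_pos_of_pos hc _
  have hw0 : 0 ≤ w := mul_nonneg (inv_nonneg.2 hp0.le) (by linarith)
  obtain ⟨K, hK⟩ := exists_nat_mul_rpow_lt Real.pi_pos.le zero_le_two
    (by positivity : 0 ≤ c ^ α⁻¹ + (1 - s)⁻¹ * c ^ α⁻¹ * (2 * c ^ α⁻¹) ^ w) (by positivity) hexp
  refine hK.not_ge (le_mul_rpow_of_mul_inv_le hκ ?_ hu0.le hw0 ?_)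
  · nlinarith [Real.pi_gt_three, (K.cast_nonneg : (0 : ℝ) ≤ K)]
  set T := π * (K + 2)
  have hε : (T ^ (-q) / c) ^ α⁻¹ = (c ^ α⁻¹ * T ^ u)⁻¹ := by
    rw [Real.div_rpow (by positivity) hc.le, ← Real.rpow_mul (by positivity), neg_mul,
      ← div_eq_mul_inv, Real.rpow_neg (by positivity), mul_inv, div_eq_mul_inv, mul_comm]
  rw [← hε]
  obtain ⟨v, hv1, hvmono, hvgap⟩ :=
    exists_monotone_seq_rpow_le_dist_image hq (hf.continuousOn hα) hsurj (K + 1)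
  refine nat_mul_le_of_le_dist_spiralPoint hp0 hs0 hsp hs1 (by rw [hε]; positivity)
    (fun i hi => (hv1 i hi).le) hvmono fun i hi => ?_
  have hgap := hvgap i hi
  rw [Nat.cast_add_one, add_assoc, one_add_one_eq_two] at hgap
  exact div_rpow_inv_le_of_le_mul_rpow (by positivity) hc dist_nonneg hα (hgap.trans
    (hfc _ (spiralPoint_mem_spiral (hv1 i hi.le)) _ (spiralPoint_mem_spiral (hv1 (i + 1) hi))))

theorem holder_exponent_bound_hyperbolic_general (p q α : ℝ) (f : ℂ → ℂ)
    (hq : 0 < q) (hqp : q < p) (hp1 : p ≤ 1)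
    (hα0 : 0 < α)
    (hsurj : f '' spiral p p = spiral q q)
    (hf : HolderOnSet f α (spiral p p)) :
    α ≤ (p + q) / (2 * p) := by
  have hp : 0 < p := hq.trans hqp
  calc α ≤ q / p := holder_exponent_le_div_of_image_spiral_eq hq hp hp1 hα0 hsurj hf
    _ ≤ (p + q) / (2 * p) := by
      rw [div_le_div_iff₀ hp (by positivity)]
      nlinarith

theorem holder_exponent_bound_hyperbolic (p q α : ℝ) (f : ℂ → ℂ)
    (hq : 0 < q) (hqp : q < p) (hp1 : p ≤ 1)
    (hα0 : 0 < α) (hα1 : α ≤ 1)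
    (hsurj : f '' spiral p p = spiral q q)
    (hf : HolderOnSet f α (spiral p p)) :
    α ≤ (p + q) / (2 * p) :=
  holder_exponent_bound_hyperbolic_general p q α f hq hqp hp1 hα0 hsurj hf
end

section
/- Let 0 < p ≤ q. For every integer k ≥ 1, the 1-dimensional Hausdorff measure of the k-th full turn satisfies (2πk)^{-p} ≤ H¹(S_{p,q}^k) ≤ 8(2πk)^{-p}. -/
/-!
Lower bound: on the first half of the turn the real part `t ^ (-p) * cos t` runs from
`(2πk) ^ (-p)` down to `-(2πk + π) ^ (-p)`, so the projection of the turn to the real axis, which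
is 1-Lipschitz, covers an interval of length at least `(2πk) ^ (-p)`.

Upper bound: if `‖γ'‖ ≤ G'` on `[a, b]`, then `‖γ t - γ s‖ ≤ G t - G s`, so `γ` factors through
`G` by a 1-Lipschitz map and `H¹(γ [a, b]) ≤ G b - G a`. Since `q t ^ (-q-1) ≤ (p + 1) t ^ (-p-1)`
for `t ≥ e`, on `[a, a + 2π]` with `a = 2πk` the speed of the spiral is at most `M / y t ^ 2`, where
`M = a ^ (-p) (1 + (2p + 1) / a)` and `y t = 1 + p (t - a) / (4a)` (from `(t / a) ^ p ≥ y t ^ 2`).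
Integrating gives `H¹ ≤ 2πM / (1 + πp / (2a))`, and this is at most `8 a ^ (-p)` because
`2π (1 + 1 / a) ≤ 8`.
-/

open Set Metric MeasureTheory

/-- The `k`-th full turn of the elliptical polynomial spiral `S_{p,q}`. -/
noncomputable def spiralTurn (p q : ℝ) (k : ℕ) : Set ℂ :=
  {z : ℂ | ∃ t : ℝ, 2 * Real.pi * k ≤ t ∧ t < 2 * Real.pi * (k + 1) ∧
    z = (t ^ (-p) * Real.cos t : ℝ) + (t ^ (-q) * Real.sin t : ℝ) * Complex.I}

theorem hausdorffMeasure_image_le_of_edist_le {X Y Z : Type*} [EMetricSpace Y] [EMetricSpace Z]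
    [MeasurableSpace Y] [BorelSpace Y] [MeasurableSpace Z] [BorelSpace Z]
    {f : X → Y} {g : X → Z} {s : Set X}
    (h : ∀ x ∈ s, ∀ y ∈ s, edist (f x) (f y) ≤ edist (g x) (g y)) {d : ℝ} (hd : 0 ≤ d) :
    μH[d] (f '' s) ≤ μH[d] (g '' s) := by
  rcases isEmpty_or_nonempty X with hX | hX
  · simp [s.eq_empty_of_isEmpty]
  set φ := f ∘ Function.invFunOn g s
  have hφ : ∀ x ∈ s, φ (g x) = f x := fun x hx => by
    have hmem : ∃ y ∈ s, g y = g x := ⟨x, hx, rfl⟩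
    refine edist_le_zero.1 ((h _ (Function.invFunOn_mem hmem) x hx).trans ?_)
    rw [Function.invFunOn_eq hmem, edist_self]
  have hfφ : f '' s = φ '' (g '' s) := by
    rw [image_image]; exact (image_congr hφ).symm
  have hlip : LipschitzOnWith 1 φ (g '' s) := by
    rintro _ ⟨x, hx, rfl⟩ _ ⟨y, hy, rfl⟩
    simpa [hφ x hx, hφ y hy] using h x hx y hy
  simpa [hfφ] using hlip.hausdorffMeasure_image_le hd

theorem norm_sub_le_sub_of_norm_deriv_le {E : Type*} [NormedAddCommGroup E] [NormedSpace ℝ E]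
    {f f' : ℝ → E} {G G' : ℝ → ℝ} {a b : ℝ} (hab : a ≤ b)
    (hf : ∀ x ∈ Icc a b, HasDerivAt f (f' x) x) (hG : ∀ x ∈ Icc a b, HasDerivAt G (G' x) x)
    (bound : ∀ x ∈ Icc a b, ‖f' x‖ ≤ G' x) :
    ‖f b - f a‖ ≤ G b - G a :=
  image_norm_le_of_norm_deriv_right_le_deriv_boundary' (f := fun x => f x - f a)
    (B := fun x => G x - G a)
    (fun x hx => ((hf x hx).continuousAt.sub continuousAt_const).continuousWithinAt)
    (fun x hx => ((hf x (Ico_subset_Icc_self hx)).sub_const _).hasDerivWithinAt)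
    (by simp)
    (fun x hx => ((hG x hx).continuousAt.sub continuousAt_const).continuousWithinAt)
    (fun x hx => ((hG x (Ico_subset_Icc_self hx)).sub_const _).hasDerivWithinAt)
    (fun x hx => bound x (Ico_subset_Icc_self hx)) (right_mem_Icc.2 hab)

theorem hausdorffMeasure_image_Icc_le_of_norm_deriv_le {E : Type*} [NormedAddCommGroup E]
    [NormedSpace ℝ E] [MeasurableSpace E] [BorelSpace E]
    {f f' : ℝ → E} {G G' : ℝ → ℝ} {a b : ℝ} (hab : a ≤ b)
    (hf : ∀ x ∈ Icc a b, HasDerivAt f (f' x) x) (hG : ∀ x ∈ Icc a b, HasDerivAt G (G' x) x)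
    (bound : ∀ x ∈ Icc a b, ‖f' x‖ ≤ G' x) :
    μH[1] (f '' Icc a b) ≤ ENNReal.ofReal (G b - G a) := by
  have hdom : ∀ x ∈ Icc a b, ∀ y ∈ Icc a b, x ≤ y → ‖f y - f x‖ ≤ G y - G x :=
    fun x hx y hy hxy =>
      norm_sub_le_sub_of_norm_deriv_le hxy
        (fun t ht => hf t (Icc_subset_Icc hx.1 hy.2 ht))
        (fun t ht => hG t (Icc_subset_Icc hx.1 hy.2 ht))
        (fun t ht => bound t (Icc_subset_Icc hx.1 hy.2 ht))
  have hdist : ∀ x ∈ Icc a b, ∀ y ∈ Icc a b, edist (f x) (f y) ≤ edist (G x) (G y) := by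
    intro x hx y hy
    rw [edist_dist, edist_dist, dist_eq_norm, Real.dist_eq]
    refine ENNReal.ofReal_le_ofReal ?_
    rcases le_total x y with hxy | hxy
    · rw [norm_sub_rev, abs_sub_comm]; exact (hdom x hx y hy hxy).trans (le_abs_self _)
    · exact (hdom y hy x hx hxy).trans (le_abs_self _)
  have hmaps : G '' Icc a b ⊆ Icc (G a) (G b) := by
    rintro _ ⟨x, hx, rfl⟩
    exact ⟨sub_nonneg.1 ((norm_nonneg _).trans (hdom a (left_mem_Icc.2 hab) x hx hx.1)),
      sub_nonneg.1 ((norm_nonneg _).trans (hdom x hx b (right_mem_Icc.2 hab) hx.2))⟩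
  calc μH[1] (f '' Icc a b) ≤ μH[1] (G '' Icc a b) :=
        hausdorffMeasure_image_le_of_edist_le hdist zero_le_one
    _ ≤ μH[1] (Icc (G a) (G b)) := measure_mono hmaps
    _ = ENNReal.ofReal (G b - G a) := by rw [hausdorffMeasure_real, Real.volume_Icc]

theorem ofReal_abs_sub_le_hausdorffMeasure_image {f : ℝ → ℝ} {a b : ℝ}
    (hf : ContinuousOn f (uIcc a b)) :
    ENNReal.ofReal |f b - f a| ≤ μH[1] (f '' uIcc a b) := by
  rw [hausdorffMeasure_real, ← Real.volume_interval]
  exact measure_mono (intermediate_value_uIcc hf)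

section

open Real

theorem mul_rpow_neg_sub_one_le {p q t : ℝ} (hp : 0 ≤ p) (hpq : p ≤ q) (ht : exp 1 ≤ t) :
    q * t ^ (-q - 1) ≤ (p + 1) * t ^ (-p - 1) := by
  have ht0 : 0 < t := (exp_pos 1).trans_le ht
  have hlog : 1 ≤ log t := (le_log_iff_exp_le ht0).2 ht
  have hpow : 1 + (q - p) ≤ t ^ (q - p) := by
    rw [rpow_def_of_pos ht0]
    nlinarith [add_one_le_exp (log t * (q - p))]
  have hsplit : t ^ (-q - 1) = t ^ (-p - 1) / t ^ (q - p) := by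
    rw [eq_div_iff (rpow_pos_of_pos ht0 _).ne', ← rpow_add ht0]; ring_nf
  have hq : q ≤ (p + 1) * t ^ (q - p) := by
    nlinarith [mul_le_mul_of_nonneg_left hpow (by linarith : 0 ≤ p + 1),
      mul_nonneg hp (sub_nonneg.2 hpq)]
  rw [hsplit, mul_div_assoc', div_le_iff₀ (rpow_pos_of_pos ht0 _), mul_right_comm]
  exact mul_le_mul_of_nonneg_right hq (rpow_nonneg ht0.le _)

theorem rpow_neg_le_div_sq {p a t : ℝ} (hp : 0 ≤ p) (ha : 0 < a) (hat : a ≤ t) (hta : t ≤ 2 * a) :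
    t ^ (-p) ≤ a ^ (-p) / (1 + p * (t - a) / (4 * a)) ^ 2 := by
  have ht0 : 0 < t := ha.trans_le hat
  have hlog : (t - a) / (2 * a) ≤ log (t / a) := by
    refine le_trans ?_ (one_sub_inv_le_log_of_pos (div_pos ht0 ha))
    rw [inv_div, div_le_iff₀ (by positivity)]
    field_simp
    nlinarith
  have hsq : (1 + p * (t - a) / (4 * a)) ^ 2 ≤ (t / a) ^ p := by
    calc (1 + p * (t - a) / (4 * a)) ^ 2 ≤ exp (p * (t - a) / (4 * a)) ^ 2 := by
          gcongr
          linarith [add_one_le_exp (p * (t - a) / (4 * a))]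
      _ = exp (p * ((t - a) / (2 * a))) := by rw [← exp_nat_mul]; congr 1; field_simp; ring
      _ ≤ (t / a) ^ p := by
          rw [rpow_def_of_pos (div_pos ht0 ha), mul_comm (log _)]
          exact exp_le_exp.2 (mul_le_mul_of_nonneg_left hlog hp)
  rw [div_rpow ht0.le ha.le] at hsq
  have hy : 0 < 1 + p * (t - a) / (4 * a) := by
    have := div_nonneg (mul_nonneg hp (sub_nonneg.2 hat)) (by positivity : (0:ℝ) ≤ 4 * a)
    linarith
  rw [rpow_neg ht0.le, rpow_neg ha.le, le_div_iff₀ (by positivity),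
    inv_mul_le_iff₀ (rpow_pos_of_pos ht0 p), ← div_eq_mul_inv]
  exact hsq

end

namespace EllipticalSpiral

open Real

noncomputable def spiral (p q t : ℝ) : ℂ :=
  (t ^ (-p) * cos t : ℝ) + (t ^ (-q) * sin t : ℝ) * Complex.I

theorem spiralTurn_eq_image (p q : ℝ) (k : ℕ) :
    spiralTurn p q k = spiral p q '' Ico (2 * π * k) (2 * π * (k + 1)) := by
  ext z
  simp only [spiralTurn, spiral, mem_ofPred_eq, mem_image, mem_Ico, and_assoc, eq_comm]

theorem hasDerivAt_spiral (p q : ℝ) {t : ℝ} (ht : 0 < t) :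
    HasDerivAt (spiral p q)
      (((-(t ^ (-p) * sin t) : ℝ) + (t ^ (-q) * cos t : ℝ) * Complex.I) -
        ((p * t ^ (-p - 1) * cos t : ℝ) + (q * t ^ (-q - 1) * sin t : ℝ) * Complex.I)) t := by
  have hx := (hasDerivAt_rpow_const (p := -p) (Or.inl ht.ne')).mul (hasDerivAt_cos t)
  have hy := (hasDerivAt_rpow_const (p := -q) (Or.inl ht.ne')).mul (hasDerivAt_sin t)
  refine (hx.ofReal_comp.add (hy.ofReal_comp.mul_const Complex.I)).congr_deriv ?_
  push_cast; ring

theorem norm_deriv_spiral_le {p q t : ℝ} (hp : 0 ≤ p) (hpq : p ≤ q) (ht : 1 ≤ t) :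
    ‖deriv (spiral p q) t‖ ≤ t ^ (-p) + (p * t ^ (-p - 1) + q * t ^ (-q - 1)) := by
  have ht0 : 0 < t := one_pos.trans_le ht
  rw [(hasDerivAt_spiral p q ht0).deriv]
  refine (norm_sub_le _ _).trans (add_le_add ?_ ?_)
  · have hqp : t ^ (-q) ≤ t ^ (-p) := rpow_le_rpow_of_exponent_le ht (by linarith)
    have hq0 : 0 ≤ t ^ (-q) := rpow_nonneg ht0.le _
    rw [Complex.norm_add_mul_I, sqrt_le_left (rpow_nonneg ht0.le _)]
    nlinarith [sin_sq_add_cos_sq t, mul_le_mul hqp hqp hq0 (hq0.trans hqp), sq_nonneg (cos t)]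
  · refine (Complex.norm_le_abs_re_add_abs_im _).trans (add_le_add ?_ ?_) <;>
      simp only [Complex.add_re, Complex.add_im, Complex.mul_re, Complex.mul_im,
        Complex.ofReal_re, Complex.ofReal_im, Complex.I_re, Complex.I_im] <;>
      simp only [mul_zero, mul_one, sub_zero, add_zero, zero_add, abs_mul]
    · rw [abs_of_nonneg hp, abs_of_nonneg (rpow_nonneg ht0.le _)]
      exact mul_le_of_le_one_right (mul_nonneg hp (rpow_nonneg ht0.le _)) (abs_cos_le_one t)
    · rw [abs_of_nonneg (hp.trans hpq), abs_of_nonneg (rpow_nonneg ht0.le _)]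
      exact mul_le_of_le_one_right (mul_nonneg (hp.trans hpq) (rpow_nonneg ht0.le _))
        (abs_sin_le_one t)

theorem ofReal_rpow_neg_le_hausdorffMeasure_spiral_image (p q : ℝ) {a : ℝ} (ha : 0 < a)
    (hcos : cos a = 1) :
    ENNReal.ofReal (a ^ (-p)) ≤ μH[1] (spiral p q '' Icc a (a + π)) := by
  set x : ℝ → ℝ := fun t => t ^ (-p) * cos t
  have hint : a ≤ a + π := by linarith [pi_pos]
  have hx : ContinuousOn x (uIcc a (a + π)) := by
    rw [uIcc_of_le hint]
    exact ContinuousOn.mul (fun t ht => (continuousAt_rpow_const _ _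
      (Or.inl (ha.trans_le ht.1).ne')).continuousWithinAt) continuous_cos.continuousOn
  have hre : x '' uIcc a (a + π) = Complex.re '' (spiral p q '' Icc a (a + π)) := by
    rw [image_image, uIcc_of_le hint]
    refine image_congr fun t _ => ?_
    simp only [x, spiral, Complex.add_re, Complex.ofReal_re, Complex.mul_I_re, Complex.ofReal_im,
      neg_zero, add_zero]
  calc ENNReal.ofReal (a ^ (-p)) ≤ ENNReal.ofReal |x (a + π) - x a| := by
        refine ENNReal.ofReal_le_ofReal (le_abs.2 (Or.inr ?_))
        simp only [x, cos_add_pi, hcos]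
        linarith [rpow_pos_of_pos (ha.trans_le hint) (-p)]
    _ ≤ μH[1] (x '' uIcc a (a + π)) := ofReal_abs_sub_le_hausdorffMeasure_image hx
    _ ≤ μH[1] (spiral p q '' Icc a (a + π)) := by
        have hlip : LipschitzWith 1 Complex.re := by
          have := Complex.reCLM.lipschitz
          rwa [Complex.reCLM_nnnorm] at this
        simpa [hre] using hlip.hausdorffMeasure_image_le zero_le_one (spiral p q '' Icc a (a + π))

theorem hausdorffMeasure_spiral_image_Icc_le {p q a ℓ : ℝ} (hp : 0 < p) (hpq : p ≤ q)
    (ha : exp 1 ≤ a) (hℓ : 0 ≤ ℓ) (hℓa : ℓ ≤ a) :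
    μH[1] (spiral p q '' Icc a (a + ℓ)) ≤
      ENNReal.ofReal (a ^ (-p) * (1 + (2 * p + 1) / a) * ℓ / (1 + p * ℓ / (4 * a))) := by
  have ha0 : 0 < a := (exp_pos 1).trans_le ha
  set M := a ^ (-p) * (1 + (2 * p + 1) / a)
  set y : ℝ → ℝ := fun t => 1 + p * (t - a) / (4 * a)
  have hy : ∀ t ∈ Icc a (a + ℓ), 0 < y t := fun t ht => by
    have := div_nonneg (mul_nonneg hp.le (sub_nonneg.2 ht.1)) (by positivity : (0:ℝ) ≤ 4 * a)
    simp only [y]; linarith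
  have hG : ∀ t ∈ Icc a (a + ℓ),
      HasDerivAt (fun t => -(4 * a * M / p) / y t) (M / y t ^ 2) t := fun t ht => by
    have hyt : HasDerivAt y (p / (4 * a)) t :=
      ((((hasDerivAt_id t).sub_const a).const_mul p).div_const (4 * a)).const_add 1
        |>.congr_deriv (by ring)
    refine ((hasDerivAt_const t _).div hyt (hy t ht).ne').congr_deriv ?_
    field_simp
    ring
  have hbound : ∀ t ∈ Icc a (a + ℓ), ‖deriv (spiral p q) t‖ ≤ M / y t ^ 2 := fun t ht => by
    have ht0 : 0 < t := ha0.trans_le ht.1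
    calc ‖deriv (spiral p q) t‖ ≤ t ^ (-p) + (p * t ^ (-p - 1) + q * t ^ (-q - 1)) :=
          norm_deriv_spiral_le hp.le hpq (by linarith [add_one_le_exp 1, ht.1])
      _ ≤ t ^ (-p) + (2 * p + 1) * t ^ (-p - 1) := by
          linarith [mul_rpow_neg_sub_one_le hp.le hpq (ha.trans ht.1)]
      _ = t ^ (-p) * (1 + (2 * p + 1) / t) := by rw [rpow_sub_one ht0.ne']; ring
      _ ≤ a ^ (-p) / y t ^ 2 * (1 + (2 * p + 1) / a) := by
          gcongr ?_ * (1 + (2 * p + 1) / ?_)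
          · exact rpow_neg_le_div_sq hp.le ha0 ht.1 (by linarith [ht.2])
          · exact ht.1
      _ = M / y t ^ 2 := by ring
  refine (hausdorffMeasure_image_Icc_le_of_norm_deriv_le (by linarith) (fun t ht =>
    (hasDerivAt_spiral p q (ha0.trans_le ht.1)).differentiableAt.hasDerivAt) hG hbound).trans
    (ENNReal.ofReal_le_ofReal (le_of_eq ?_))
  simp only [y, add_sub_cancel_left, sub_self, mul_zero, zero_div, add_zero]
  field_simp
  ring

end EllipticalSpiral

theorem hausdorffMeasure_spiralTurn (p q : ℝ) (hp : 0 < p) (hpq : p ≤ q)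
    (k : ℕ) (hk : 1 ≤ k) :
    ENNReal.ofReal ((2 * Real.pi * k) ^ (-p)) ≤ μH[1] (spiralTurn p q k) ∧
    μH[1] (spiralTurn p q k) ≤ ENNReal.ofReal (8 * (2 * Real.pi * k) ^ (-p)) := by
  set a := 2 * Real.pi * k
  have ha : 2 * Real.pi ≤ a := le_mul_of_one_le_right Real.two_pi_pos.le (by exact_mod_cast hk)
  have ha0 : 0 < a := Real.two_pi_pos.trans_le ha
  have hend : 2 * Real.pi * (k + 1) = a + 2 * Real.pi := by ring
  have hcos : Real.cos a = 1 :=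
    (congrArg Real.cos (by ring : a = k * (2 * Real.pi))).trans (Real.cos_nat_mul_two_pi k)
  rw [EllipticalSpiral.spiralTurn_eq_image, hend]
  constructor
  · exact (EllipticalSpiral.ofReal_rpow_neg_le_hausdorffMeasure_spiral_image p q ha0 hcos).trans
      (measure_mono (image_mono (Icc_subset_Ico_right (by linarith [Real.pi_pos]))))
  · refine (measure_mono (image_mono Ico_subset_Icc_self)).trans
      ((EllipticalSpiral.hausdorffMeasure_spiral_image_Icc_le hp hpq ?_ Real.two_pi_pos.le
        ha).trans (ENNReal.ofReal_le_ofReal ?_))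
    · linarith [Real.exp_one_lt_d9, Real.pi_gt_three]
    · rw [div_le_iff₀ (by positivity)]
      have := Real.rpow_pos_of_pos ha0 (-p)
      field_simp
      nlinarith [Real.pi_lt_d2]
end

section
/- Let 0 < p ≤ q. There exist constants c, C > 0 depending only on p, and an integer M₀, such that for all integers N > M ≥ M₀ the following hold: if p < 1 then c(N^{1−p} − M^{1−p}) ≤ Σ_{k=M}^{N} H¹(S_{p,q}^k) ≤ C(N^{1−p} − M^{1−p}); if p = 1 then c(log N − log M) ≤ Σ_{k=M}^{N} H¹(S_{p,q}^k) ≤ C(log N − log M); and if p > 1 then c(M^{1−p} − N^{1−p}) ≤ Σ_{k=M}^{N} H¹(S_{p,q}^k) ≤ C(M^{1−p} − N^{1−p}). -/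
/-!
On `[2πk, ∞)` the parametrisation `t ↦ t^{-p} cos t + i t^{-q} sin t` has speed at most
`(p + q + 2) (2πk)^{-p}`, so the `k`-th turn, the image of an interval of length `2π`, has length
`O(k^{-p})`. Conversely its real part sweeps out `[0, (2πk)^{-p}]` on `[2πk, 2πk + π/2]`, and
projecting to the real axis does not increase `H¹`. Hence `H¹(S^k) ≍ k^{-p}`, and comparing
`∑_{k=M}^N k^{-p}` with `∫_M^N x^{-p} dx` gives the three regimes.
-/

open Set Metric MeasureTheory

open Real intervalIntegral

section RpowIntegral

variable {p a b : ℝ}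

lemma integral_rpow_neg_of_ne_one (hp : p ≠ 1) (ha : 0 < a) (hb : 0 < b) :
    ∫ x in a..b, x ^ (-p) = (1 - p)⁻¹ * (b ^ (1 - p) - a ^ (1 - p)) := by
  rw [integral_rpow (Or.inr ⟨fun h => hp (by linarith), notMem_uIcc_of_lt ha hb⟩),
    neg_add_eq_sub, div_eq_inv_mul]

lemma integral_rpow_neg_of_one_lt (hp : 1 < p) (ha : 0 < a) (hb : 0 < b) :
    ∫ x in a..b, x ^ (-p) = (p - 1)⁻¹ * (a ^ (1 - p) - b ^ (1 - p)) := by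
  rw [integral_rpow_neg_of_ne_one hp.ne' ha hb, ← neg_sub p, inv_neg, neg_mul_comm, neg_sub]

lemma integral_rpow_neg_one (ha : 0 < a) (hb : 0 < b) :
    ∫ x in a..b, x ^ (-1 : ℝ) = log b - log a := by
  simp_rw [rpow_neg_one]
  rw [integral_inv_of_pos ha hb, log_div hb.ne' ha.ne']

lemma integral_rpow_neg_le_sum_Icc (hp : 0 ≤ p) {M N : ℕ} (hM : 1 ≤ M) (hMN : M ≤ N) :
    ∫ x in (M : ℝ)..N, x ^ (-p) ≤ ∑ k ∈ Finset.Icc M N, (k : ℝ) ^ (-p) := by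
  have hanti : AntitoneOn (fun x : ℝ => x ^ (-p)) (Icc (M : ℝ) N) :=
    (antitoneOn_rpow_Ioi_of_exponent_nonpos (neg_nonpos.2 hp)).mono fun x hx =>
      lt_of_lt_of_le (by exact_mod_cast hM) hx.1
  calc ∫ x in (M : ℝ)..N, x ^ (-p) ≤ ∑ k ∈ Finset.Ico M N, (k : ℝ) ^ (-p) :=
        hanti.integral_le_sum_Ico hMN
    _ ≤ ∑ k ∈ Finset.Icc M N, (k : ℝ) ^ (-p) :=
        Finset.sum_le_sum_of_subset_of_nonneg Finset.Ico_subset_Icc_self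
          fun _ _ _ => by positivity

lemma sum_Icc_rpow_neg_le_integral (hp : 0 ≤ p) {M N : ℕ} (hM : 1 ≤ M) (hMN : M < N) :
    ∑ k ∈ Finset.Icc M N, (k : ℝ) ^ (-p) ≤ (1 + 2 ^ p) * ∫ x in (M : ℝ)..N, x ^ (-p) := by
  have hM1 : (1 : ℝ) ≤ M := by exact_mod_cast hM
  have hM0 : (0 : ℝ) < M := by linarith
  have hanti : AntitoneOn (fun x : ℝ => x ^ (-p)) (Icc (M : ℝ) N) :=
    (antitoneOn_rpow_Ioi_of_exponent_nonpos (neg_nonpos.2 hp)).mono fun x hx => hM0.trans_le hx.1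
  set S := ∑ k ∈ Finset.Ico M N, ((k + 1 : ℕ) : ℝ) ^ (-p)
  have hS : S ≤ ∫ x in (M : ℝ)..N, x ^ (-p) := hanti.sum_le_integral_Ico hMN.le
  have hsplit : ∑ k ∈ Finset.Icc M N, (k : ℝ) ^ (-p) = (M : ℝ) ^ (-p) + S := by
    rw [← Finset.Ico_add_one_right_eq_Icc, Finset.sum_eq_sum_Ico_succ_bot (by omega),
      ← Finset.sum_Ico_add']
  have hfirst : (M : ℝ) ^ (-p) ≤ 2 ^ p * S := by
    calc (M : ℝ) ^ (-p) = 2 ^ p * (2 * M : ℝ) ^ (-p) := by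
          rw [mul_rpow zero_le_two hM0.le, rpow_neg zero_le_two, ← mul_assoc,
            mul_inv_cancel₀ (by positivity), one_mul]
      _ ≤ 2 ^ p * ((M + 1 : ℕ) : ℝ) ^ (-p) := by
          refine mul_le_mul_of_nonneg_left ?_ (by positivity)
          exact rpow_le_rpow_of_nonpos (by positivity) (by push_cast; linarith) (by linarith)
      _ ≤ 2 ^ p * S := by
          gcongr
          exact Finset.single_le_sum (f := fun k : ℕ => ((k + 1 : ℕ) : ℝ) ^ (-p))
            (fun _ _ => by positivity) (Finset.left_mem_Ico.2 hMN)
  nlinarith [rpow_pos_of_pos two_pos p]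

end RpowIntegral

lemma abs_neg_mul_rpow_mul_add_rpow_mul_le {r t u v : ℝ} (hr : 0 ≤ r) (ht : 1 ≤ t)
    (hu : |u| ≤ 1) (hv : |v| ≤ 1) :
    |-r * t ^ (-r - 1) * u + t ^ (-r) * v| ≤ (r + 1) * t ^ (-r) := by
  have ht0 : 0 < t := by linarith
  have hle : t ^ (-r - 1) ≤ t ^ (-r) := rpow_le_rpow_of_exponent_le ht (by linarith)
  calc |-r * t ^ (-r - 1) * u + t ^ (-r) * v|
      ≤ r * t ^ (-r - 1) * |u| + t ^ (-r) * |v| := by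
        refine (abs_add_le _ _).trans_eq ?_
        rw [abs_mul, abs_mul, abs_mul, abs_neg, abs_of_nonneg hr,
          abs_of_pos (rpow_pos_of_pos ht0 _), abs_of_pos (rpow_pos_of_pos ht0 _)]
    _ ≤ r * t ^ (-r) * 1 + t ^ (-r) * 1 := by gcongr
    _ = (r + 1) * t ^ (-r) := by ring

noncomputable def spiralMap (p q t : ℝ) : ℂ :=
  (t ^ (-p) * cos t : ℝ) + (t ^ (-q) * sin t : ℝ) * Complex.I

lemma spiralTurn_eq_image (p q : ℝ) (k : ℕ) :
    spiralTurn p q k = spiralMap p q '' Ico (2 * π * k) (2 * π * k + 2 * π) := by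
  ext z
  simp only [spiralTurn, spiralMap, mem_ofPred_eq, mem_image, mem_Ico, mul_add, mul_one, eq_comm,
    and_assoc]

@[simp]
lemma spiralMap_re (p q t : ℝ) : (spiralMap p q t).re = t ^ (-p) * cos t := by
  simp [spiralMap, Complex.cos_ofReal_re]

lemma hasDerivAt_spiralMap (p q : ℝ) {t : ℝ} (ht : t ≠ 0) :
    HasDerivAt (spiralMap p q)
      ((-p * t ^ (-p - 1) * cos t + t ^ (-p) * -sin t : ℝ) +
        (-q * t ^ (-q - 1) * sin t + t ^ (-q) * cos t : ℝ) * Complex.I) t :=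
  (((hasDerivAt_rpow_const (p := -p) (Or.inl ht)).mul (hasDerivAt_cos t)).ofReal_comp.add
    (((hasDerivAt_rpow_const (p := -q) (Or.inl ht)).mul (hasDerivAt_sin t)).ofReal_comp.mul_const
      Complex.I))

lemma norm_deriv_spiralMap_le {p q t : ℝ} (hp : 0 ≤ p) (hpq : p ≤ q) (ht : 1 ≤ t) :
    ‖deriv (spiralMap p q) t‖ ≤ (p + q + 2) * t ^ (-p) := by
  rw [(hasDerivAt_spiralMap p q (by linarith : (0 : ℝ) < t).ne').deriv]
  have hqp : t ^ (-q) ≤ t ^ (-p) := rpow_le_rpow_of_exponent_le ht (by linarith)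
  calc _ ≤ |-p * t ^ (-p - 1) * cos t + t ^ (-p) * -sin t| +
          |-q * t ^ (-q - 1) * sin t + t ^ (-q) * cos t| := by
        refine (norm_add_le _ _).trans_eq ?_
        rw [norm_mul, Complex.norm_I, mul_one, Complex.norm_real, Complex.norm_real,
          norm_eq_abs, norm_eq_abs]
    _ ≤ (p + 1) * t ^ (-p) + (q + 1) * t ^ (-q) :=
        add_le_add
          (abs_neg_mul_rpow_mul_add_rpow_mul_le hp ht (abs_cos_le_one t)
            ((abs_neg _).trans_le (abs_sin_le_one t)))
          (abs_neg_mul_rpow_mul_add_rpow_mul_le (hp.trans hpq) ht (abs_sin_le_one t)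
            (abs_cos_le_one t))
    _ ≤ (p + 1) * t ^ (-p) + (q + 1) * t ^ (-p) := by gcongr; linarith
    _ = (p + q + 2) * t ^ (-p) := by ring

lemma lipschitzOnWith_spiralMap {p q a : ℝ} (hp : 0 ≤ p) (hpq : p ≤ q) (ha : 1 ≤ a) :
    LipschitzOnWith ((p + q + 2) * a ^ (-p)).toNNReal (spiralMap p q) (Ici a) := by
  refine (convex_Ici a).lipschitzOnWith_of_nnnorm_deriv_le
    (fun t ht => (hasDerivAt_spiralMap p q (by linarith [mem_Ici.1 ht])).differentiableAt)
    fun t ht => ?_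
  have ht : a ≤ t := ht
  have hpq2 : 0 ≤ p + q + 2 := by linarith
  rw [← NNReal.coe_le_coe, coe_nnnorm, Real.coe_toNNReal _ (by positivity)]
  calc ‖deriv (spiralMap p q) t‖ ≤ (p + q + 2) * t ^ (-p) :=
        norm_deriv_spiralMap_le hp hpq (ha.trans ht)
    _ ≤ (p + q + 2) * a ^ (-p) :=
        mul_le_mul_of_nonneg_left (rpow_le_rpow_of_nonpos (by linarith) ht (by linarith)) hpq2

lemma hausdorffMeasure_spiralTurn_le {p q : ℝ} (hp : 0 ≤ p) (hpq : p ≤ q) {k : ℕ} (hk : 1 ≤ k) :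
    μH[1] (spiralTurn p q k) ≤ ENNReal.ofReal ((p + q + 2) * 2 * π * (2 * π * k) ^ (-p)) := by
  have ha : 1 ≤ 2 * π * k := by
    have : (1 : ℝ) ≤ k := by exact_mod_cast hk
    nlinarith [pi_gt_three]
  have hC : 0 ≤ (p + q + 2) * (2 * π * k) ^ (-p) :=
    mul_nonneg (by linarith) (rpow_nonneg (by linarith) _)
  rw [spiralTurn_eq_image]
  calc μH[1] (spiralMap p q '' Ico (2 * π * k) (2 * π * k + 2 * π))
      ≤ ((p + q + 2) * (2 * π * k) ^ (-p)).toNNReal ^ (1 : ℝ) *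
          μH[1] (Ico (2 * π * k) (2 * π * k + 2 * π)) :=
        ((lipschitzOnWith_spiralMap hp hpq ha).mono Ico_subset_Ici_self).hausdorffMeasure_image_le
          zero_le_one
    _ = ENNReal.ofReal ((p + q + 2) * 2 * π * (2 * π * k) ^ (-p)) := by
        rw [hausdorffMeasure_real, Real.volume_Ico, ENNReal.rpow_one, add_sub_cancel_left,
          ENNReal.ofNNReal_toNNReal, ← ENNReal.ofReal_mul hC]
        ring_nf

lemma ofReal_rpow_le_hausdorffMeasure_spiralTurn (p q : ℝ) {k : ℕ} (hk : 1 ≤ k) :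
    ENNReal.ofReal ((2 * π * k) ^ (-p)) ≤ μH[1] (spiralTurn p q k) := by
  set a := 2 * π * k
  have ha : 0 < a := by positivity
  set f : ℝ → ℝ := fun t => t ^ (-p) * cos t
  have hfa : f a = a ^ (-p) := by
    have : cos a = 1 := by rw [show a = k * (2 * π) by ring, cos_nat_mul_two_pi]
    simp only [f, this, mul_one]
  have hfb : f (a + π / 2) = 0 := by
    have : cos (a + π / 2) = 0 := by
      rw [show a + π / 2 = π / 2 + k * (2 * π) by ring, cos_add_nat_mul_two_pi, cos_pi_div_two]
    simp only [f, this, mul_zero]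
  have hcont : ContinuousOn f (Icc a (a + π / 2)) := fun t ht =>
    ((continuousAt_rpow_const t (-p) (Or.inl (by linarith [ht.1]))).mul
      continuous_cos.continuousAt).continuousWithinAt
  have hsub : Icc 0 (a ^ (-p)) ⊆ Complex.re '' spiralTurn p q k := by
    rw [spiralTurn_eq_image, image_image]
    calc Icc 0 (a ^ (-p)) ⊆ f '' Icc a (a + π / 2) := by
          simpa only [hfa, hfb] using intermediate_value_Icc' (by linarith [pi_pos]) hcont
      _ ⊆ f '' Ico a (a + 2 * π) := image_mono fun t ht => ⟨ht.1, by linarith [ht.2, pi_pos]⟩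
      _ = _ := by simp only [spiralMap_re, f, a]
  calc ENNReal.ofReal (a ^ (-p)) = μH[1] (Icc 0 (a ^ (-p))) := by
        rw [hausdorffMeasure_real, Real.volume_Icc, sub_zero]
    _ ≤ μH[1] (Complex.re '' spiralTurn p q k) := measure_mono hsub
    _ ≤ μH[1] (spiralTurn p q k) := by
        simpa using RCLike.lipschitzWith_re.hausdorffMeasure_image_le zero_le_one
          (spiralTurn p q k)

lemma ofReal_integral_le_sum_hausdorffMeasure_spiralTurn {p : ℝ} (q : ℝ) (hp : 0 ≤ p) {M N : ℕ}
    (hM : 1 ≤ M) (hMN : M ≤ N) :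
    ENNReal.ofReal ((2 * π) ^ (-p) * ∫ x in (M : ℝ)..N, x ^ (-p)) ≤
      ∑ k ∈ Finset.Icc M N, μH[1] (spiralTurn p q k) :=
  calc ENNReal.ofReal ((2 * π) ^ (-p) * ∫ x in (M : ℝ)..N, x ^ (-p))
      ≤ ENNReal.ofReal ((2 * π) ^ (-p) * ∑ k ∈ Finset.Icc M N, (k : ℝ) ^ (-p)) :=
        ENNReal.ofReal_le_ofReal <|
          mul_le_mul_of_nonneg_left (integral_rpow_neg_le_sum_Icc hp hM hMN) (by positivity)
    _ = ∑ k ∈ Finset.Icc M N, ENNReal.ofReal ((2 * π * k) ^ (-p)) := by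
        rw [Finset.mul_sum, ENNReal.ofReal_sum_of_nonneg fun _ _ => by positivity]
        simp only [mul_rpow (by positivity : (0 : ℝ) ≤ 2 * π) (Nat.cast_nonneg _)]
    _ ≤ ∑ k ∈ Finset.Icc M N, μH[1] (spiralTurn p q k) :=
        Finset.sum_le_sum fun k hk =>
          ofReal_rpow_le_hausdorffMeasure_spiralTurn p q (hM.trans (Finset.mem_Icc.1 hk).1)

lemma sum_hausdorffMeasure_spiralTurn_le_ofReal_integral {p q : ℝ} (hp : 0 ≤ p) (hpq : p ≤ q)
    {M N : ℕ} (hM : 1 ≤ M) (hMN : M < N) :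
    ∑ k ∈ Finset.Icc M N, μH[1] (spiralTurn p q k) ≤
      ENNReal.ofReal ((p + q + 2) * 2 * π * (2 * π) ^ (-p) * (1 + 2 ^ p) *
        ∫ x in (M : ℝ)..N, x ^ (-p)) := by
  have hC : 0 ≤ (p + q + 2) * 2 * π * (2 * π) ^ (-p) := by
    have : 0 ≤ p + q + 2 := by linarith
    positivity
  calc ∑ k ∈ Finset.Icc M N, μH[1] (spiralTurn p q k)
      ≤ ∑ k ∈ Finset.Icc M N,
          ENNReal.ofReal ((p + q + 2) * 2 * π * (2 * π) ^ (-p) * (k : ℝ) ^ (-p)) := by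
        refine Finset.sum_le_sum fun k hk => ?_
        rw [mul_assoc _ ((2 * π) ^ (-p)), ← mul_rpow (by positivity) (Nat.cast_nonneg _)]
        exact hausdorffMeasure_spiralTurn_le hp hpq (hM.trans (Finset.mem_Icc.1 hk).1)
    _ = ENNReal.ofReal ((p + q + 2) * 2 * π * (2 * π) ^ (-p) *
          ∑ k ∈ Finset.Icc M N, (k : ℝ) ^ (-p)) := by
        rw [Finset.mul_sum, ENNReal.ofReal_sum_of_nonneg fun _ _ => by positivity]
    _ ≤ _ := by
        rw [mul_assoc _ (1 + 2 ^ p)]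
        exact ENNReal.ofReal_le_ofReal <|
          mul_le_mul_of_nonneg_left (sum_Icc_rpow_neg_le_integral hp hM hMN) hC

lemma sum_hausdorffMeasure_spiralTurn_mem_Icc {p q κ : ℝ} {G : ℝ → ℝ → ℝ} (hp : 0 ≤ p)
    (hpq : p ≤ q) (hI : ∀ a b : ℝ, 0 < a → 0 < b → ∫ x in a..b, x ^ (-p) = κ * G a b)
    {M N : ℕ} (hM : 1 ≤ M) (hMN : M < N) :
    ∑ k ∈ Finset.Icc M N, μH[1] (spiralTurn p q k) ∈
      Icc (ENNReal.ofReal ((2 * π) ^ (-p) * κ * G M N))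
        (ENNReal.ofReal ((p + q + 2) * 2 * π * (2 * π) ^ (-p) * (1 + 2 ^ p) * κ * G M N)) := by
  rw [mul_assoc, mul_assoc _ κ, ← hI _ _ (Nat.cast_pos.2 hM) (Nat.cast_pos.2 (hM.trans hMN.le))]
  exact ⟨ofReal_integral_le_sum_hausdorffMeasure_spiralTurn q hp hM hMN.le,
    sum_hausdorffMeasure_spiralTurn_le_ofReal_integral hp hpq hM hMN⟩

theorem sum_hausdorffMeasure_spiralTurn (p q : ℝ) (hp : 0 < p) (hpq : p ≤ q) :
    ∃ (c C : ℝ) (M₀ : ℕ), 0 < c ∧ 0 < C ∧ ∀ M N : ℕ, M₀ ≤ M → M < N →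
      (p < 1 →
        ENNReal.ofReal (c * ((N : ℝ) ^ (1 - p) - (M : ℝ) ^ (1 - p))) ≤
          ∑ k ∈ Finset.Icc M N, μH[1] (spiralTurn p q k) ∧
        ∑ k ∈ Finset.Icc M N, μH[1] (spiralTurn p q k) ≤
          ENNReal.ofReal (C * ((N : ℝ) ^ (1 - p) - (M : ℝ) ^ (1 - p)))) ∧
      (p = 1 →
        ENNReal.ofReal (c * (Real.log N - Real.log M)) ≤
          ∑ k ∈ Finset.Icc M N, μH[1] (spiralTurn p q k) ∧
        ∑ k ∈ Finset.Icc M N, μH[1] (spiralTurn p q k) ≤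
          ENNReal.ofReal (C * (Real.log N - Real.log M))) ∧
      (1 < p →
        ENNReal.ofReal (c * ((M : ℝ) ^ (1 - p) - (N : ℝ) ^ (1 - p))) ≤
          ∑ k ∈ Finset.Icc M N, μH[1] (spiralTurn p q k) ∧
        ∑ k ∈ Finset.Icc M N, μH[1] (spiralTurn p q k) ≤
          ENNReal.ofReal (C * ((M : ℝ) ^ (1 - p) - (N : ℝ) ^ (1 - p)))) := by
  set c₀ := (2 * π) ^ (-p)
  set C₀ := (p + q + 2) * 2 * π * (2 * π) ^ (-p) * (1 + 2 ^ p)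
  have hc₀ : 0 < c₀ := by positivity
  have hC₀ : 0 < C₀ := by
    have : 0 < p + q + 2 := by linarith
    positivity
  rcases lt_trichotomy p 1 with hp1 | rfl | hp1
  · have hκ : 0 < (1 - p)⁻¹ := inv_pos.2 (sub_pos.2 hp1)
    exact ⟨c₀ * (1 - p)⁻¹, C₀ * (1 - p)⁻¹, 1, mul_pos hc₀ hκ, mul_pos hC₀ hκ, fun M N hM hMN =>
      ⟨fun _ => sum_hausdorffMeasure_spiralTurn_mem_Icc (G := fun a b => b ^ (1 - p) - a ^ (1 - p))
        hp.le hpq (fun _ _ => integral_rpow_neg_of_ne_one hp1.ne) hM hMN,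
      fun h => absurd h hp1.ne, fun h => absurd h hp1.not_gt⟩⟩
  · exact ⟨c₀ * 1, C₀ * 1, 1, by rwa [mul_one], by rwa [mul_one], fun M N hM hMN =>
      ⟨fun h => absurd h (lt_irrefl 1),
      fun _ => sum_hausdorffMeasure_spiralTurn_mem_Icc (G := fun a b => log b - log a) hp.le hpq
        (fun _ _ ha hb => (integral_rpow_neg_one ha hb).trans (one_mul _).symm) hM hMN,
      fun h => absurd h (lt_irrefl 1)⟩⟩
  · have hκ : 0 < (p - 1)⁻¹ := inv_pos.2 (sub_pos.2 hp1)
    exact ⟨c₀ * (p - 1)⁻¹, C₀ * (p - 1)⁻¹, 1, mul_pos hc₀ hκ, mul_pos hC₀ hκ, fun M N hM hMN =>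
      ⟨fun h => absurd h hp1.not_gt, fun h => absurd h hp1.ne',
      fun _ => sum_hausdorffMeasure_spiralTurn_mem_Icc (G := fun a b => a ^ (1 - p) - b ^ (1 - p))
        hp.le hpq (fun _ _ => integral_rpow_neg_of_one_lt hp1) hM hMN⟩⟩
end
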